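/- Let G be a Gröbner basis for a homogeneous ideal I ⊆ S = k[x_0,...,x_r] with respect to an elimination order τ for x_0. Then G_p = {incoef_{x_0}(g) : g ∈ G, deg_{x_0}(g) ≤ p} is a Gröbner basis for the p-th partial elimination ideal K_p(I) with respect to the induced order τ_0 on k[x_1,...,x_r]. -/

import Mathlib

open MvPolynomial

/-- A finite graded free resolution of a (homogeneous) ideal `I` in a polynomial ring. -/
structure GradedFreeRes {k : Type*} [Field k] {N : ℕ}
    (I : Ideal (MvPolynomial (Fin N) k)) where
  rk : ℕ → ℕ
  shift : (i : ℕ) → Fin (rk i) → ℕ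
  len : ℕ
  rk_eq_zero : ∀ i, len < i → rk i = 0
  gen : Fin (rk 0) → MvPolynomial (Fin N) k
  gen_hom : ∀ j, (gen j).IsHomogeneous (shift 0 j)
  mat : (i : ℕ) → Matrix (Fin (rk i)) (Fin (rk (i + 1))) (MvPolynomial (Fin N) k)
  mat_hom : ∀ i a b, mat i a b = 0 ∨
    (shift i a ≤ shift (i + 1) b ∧ (mat i a b).IsHomogeneous (shift (i + 1) b - shift i a))
  aug_surj : LinearMap.range
    (Fintype.linearCombination (MvPolynomial (Fin N) k) gen) = I
  aug_exact : LinearMap.range (mat 0).mulVecLin =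
    LinearMap.ker
      (Fintype.linearCombination (MvPolynomial (Fin N) k) gen)
  complex_exact : ∀ i,
    LinearMap.range (mat (i + 1)).mulVecLin = LinearMap.ker (mat i).mulVecLin

/-- The Castelnuovo–Mumford regularity of a homogeneous ideal, defined as the minimum over
all finite graded free resolutions of `I` of the maximum of `shift i j - i`. -/
noncomputable def cmReg {k : Type*} [Field k] {N : ℕ}
    (I : Ideal (MvPolynomial (Fin N) k)) : ℕ :=
  sInf { d | ∃ R : GradedFreeRes I, ∀ i, ∀ j : Fin (R.rk i), R.shift i j ≤ d + i }

/-- The leading exponent (degree) of a polynomial with respect to a monomial order. -/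
noncomputable def ldeg {k : Type*} [Field k] {N : ℕ} (τ : MonomialOrder (Fin N))
    (f : MvPolynomial (Fin N) k) : Fin N →₀ ℕ :=
  τ.toSyn.symm (f.support.sup fun m => τ.toSyn m)

/-- The initial ideal of `I` with respect to a monomial order `τ`. -/
noncomputable def initialIdeal {k : Type*} [Field k] {N : ℕ} (τ : MonomialOrder (Fin N))
    (I : Ideal (MvPolynomial (Fin N) k)) : Ideal (MvPolynomial (Fin N) k) :=
  Ideal.span { q | ∃ f ∈ I, f ≠ 0 ∧ q = monomial (ldeg τ f) (1 : k) }

/-- A homogeneous ideal: one containing all homogeneous components of its elements. -/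
def IsHomogeneousIdeal {k : Type*} [Field k] {N : ℕ}
    (I : Ideal (MvPolynomial (Fin N) k)) : Prop :=
  ∀ f ∈ I, ∀ d : ℕ, homogeneousComponent d f ∈ I

/-- The `p`-th partial elimination ideal (as a set): leading coefficients with respect to the
variable `x₀` of the elements of `I` of `x₀`-degree `p`, together with `0`. -/
noncomputable def pelimSet {k : Type*} [Field k] {N : ℕ}
    (I : Ideal (MvPolynomial (Fin (N + 1)) k)) (p : ℕ) :
    Set (MvPolynomial (Fin N) k) :=
  insert 0 { h | ∃ f ∈ I, f ≠ 0 ∧ (finSuccEquiv k N f).natDegree = p ∧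
    (finSuccEquiv k N f).leadingCoeff = h }

/-- An elimination order for the first variable: any monomial involving `x₀` is larger than
any monomial not involving `x₀`. -/
def IsElimOrder {N : ℕ} (τ : MonomialOrder (Fin (N + 1))) : Prop :=
  ∀ a b : Fin (N + 1) →₀ ℕ, a 0 = 0 → b 0 ≠ 0 → τ.toSyn a < τ.toSyn b

/-- `τ₀` is the restriction of `τ` to the last `N` variables. -/
def InducedOrder {N : ℕ} (τ : MonomialOrder (Fin (N + 1))) (τ₀ : MonomialOrder (Fin N)) : Prop :=
  ∀ a b : Fin N →₀ ℕ,
    τ₀.toSyn a ≤ τ₀.toSyn b ↔ τ.toSyn (a.mapDomain Fin.succ) ≤ τ.toSyn (b.mapDomain Fin.succ)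

/-- The linear change of coordinates on a polynomial ring given by a matrix. -/
noncomputable def coordChange {k : Type*} [Field k] {N : ℕ}
    (g : Matrix (Fin N) (Fin N) k) :
    MvPolynomial (Fin N) k →ₐ[k] MvPolynomial (Fin N) k :=
  aeval fun i => ∑ j, C (g i j) * X j

/-- `J` is the generic initial ideal of `I` with respect to `τ`: for every change of
coordinates `g` in a nonempty Zariski-open subset of `GL_N`, the initial ideal of `g · I`
is `J`. -/
noncomputable def IsGin {k : Type*} [Field k] {N : ℕ} (τ : MonomialOrder (Fin N))
    (I J : Ideal (MvPolynomial (Fin N) k)) : Prop :=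
  ∃ P : MvPolynomial (Fin N × Fin N) k, P ≠ 0 ∧
    ∀ g : Matrix (Fin N) (Fin N) k, IsUnit g.det →
      eval (fun q => g q.1 q.2) P ≠ 0 →
        initialIdeal τ (Ideal.map (coordChange g).toRingHom I) = J

/-- `G` is a Gröbner basis of `I` with respect to `τ`: a set of nonzero elements of `I` whose
leading monomials generate the initial ideal of `I`. -/
def IsGroebnerBasis {k : Type*} [Field k] {N : ℕ} (τ : MonomialOrder (Fin N))
    (I : Ideal (MvPolynomial (Fin N) k)) (G : Set (MvPolynomial (Fin N) k)) : Prop :=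
  (0 : MvPolynomial (Fin N) k) ∉ G ∧ G ⊆ (I : Set (MvPolynomial (Fin N) k)) ∧
    initialIdeal τ I = Ideal.span ((fun g => monomial (ldeg τ g) (1 : k)) '' G)

/-!
For an elimination order `τ` for `x₀` inducing `τ₀`, the leading exponent of `f` is
`(deg_{x₀} f, ldeg_{τ₀} (incoef f))`: a monomial with a larger power of `x₀` always wins, and
among those with the top power of `x₀` the comparison is made by `τ₀`. Hence if `f ∈ I` has
`x₀`-degree `p`, the leading monomial of some `g ∈ G` divides that of `f`, which forces
`deg_{x₀} g ≤ p` and makes the leading monomial of `incoef g` divide that of `incoef f`.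
Moreover `K_p(I)` is already an ideal: it is the set of coefficients of `x₀^p` of the elements
of `I` of `x₀`-degree at most `p`.
-/

namespace Finsupp

theorem cons_add_cons {n : ℕ} {M : Type*} [AddZeroClass M] (a b : M) (s t : Fin n →₀ M) :
    cons a s + cons b t = cons (a + b) (s + t) := by
  ext i
  cases i using Fin.cases <;> simp

theorem cons_zero_eq_mapDomain_succ {n : ℕ} {M : Type*} [AddCommMonoid M] (s : Fin n →₀ M) :
    cons 0 s = s.mapDomain Fin.succ := by
  ext i
  cases i using Fin.cases with
  | zero => simp [mapDomain_of_notMem_range _ _ (by simp : (0 : Fin (n + 1)) ∉ Set.range Fin.succ)]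
  | succ j => simp [mapDomain_apply (Fin.succ_injective n)]

theorem cons_le_cons_iff {n : ℕ} {M : Type*} [Zero M] [LE M] {a b : M} {s t : Fin n →₀ M} :
    cons a s ≤ cons b t ↔ a ≤ b ∧ s ≤ t := by
  simp only [Finsupp.le_def, Fin.forall_fin_succ, cons_zero, cons_succ]

end Finsupp

namespace IsElimOrder

variable {N : ℕ} {τ : MonomialOrder (Fin (N + 1))}

theorem toSyn_lt_of_lt (helim : IsElimOrder τ) {a b : Fin (N + 1) →₀ ℕ} (h : a 0 < b 0) :
    τ.toSyn a < τ.toSyn b := by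
  have ha : a = Finsupp.cons (a 0) 0 + Finsupp.cons 0 a.tail := by
    rw [Finsupp.cons_add_cons, add_zero, zero_add, Finsupp.cons_tail]
  have hb : b = Finsupp.cons (a 0) 0 + Finsupp.cons (b 0 - a 0) b.tail := by
    rw [Finsupp.cons_add_cons, Nat.add_sub_cancel' h.le, zero_add, Finsupp.cons_tail]
  rw [ha, hb, map_add, map_add]
  exact add_lt_add_right (helim _ _ (by simp) (by simp; omega)) _

end IsElimOrder

theorem InducedOrder.toSyn_cons_le_cons_iff {N : ℕ} {τ : MonomialOrder (Fin (N + 1))}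
    {τ₀ : MonomialOrder (Fin N)} (hind : InducedOrder τ τ₀) (d : ℕ) (s t : Fin N →₀ ℕ) :
    τ.toSyn (Finsupp.cons d s) ≤ τ.toSyn (Finsupp.cons d t) ↔ τ₀.toSyn s ≤ τ₀.toSyn t := by
  have hsplit (u : Fin N →₀ ℕ) : Finsupp.cons d u = Finsupp.cons d 0 + u.mapDomain Fin.succ := by
    rw [← Finsupp.cons_zero_eq_mapDomain_succ, Finsupp.cons_add_cons, add_zero, zero_add]
  rw [hsplit s, hsplit t, map_add, map_add, add_le_add_iff_left, hind]

theorem IsElimOrder.degree_eq_cons {R : Type*} [CommSemiring R] {N : ℕ}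
    {τ : MonomialOrder (Fin (N + 1))} {τ₀ : MonomialOrder (Fin N)} (helim : IsElimOrder τ)
    (hind : InducedOrder τ τ₀) (f : MvPolynomial (Fin (N + 1)) R) :
    τ.degree f = Finsupp.cons (finSuccEquiv R N f).natDegree
      (τ₀.degree (finSuccEquiv R N f).leadingCoeff) := by
  set P := finSuccEquiv R N f
  rcases eq_or_ne f 0 with rfl | hf
  · simp [P]
  have hlc : P.leadingCoeff ≠ 0 := by simpa [P] using hf
  have hmem : Finsupp.cons P.natDegree (τ₀.degree P.leadingCoeff) ∈ f.support :=
    mem_support_coeff_finSuccEquiv.1 (τ₀.degree_mem_support hlc)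
  refine τ.toSyn.injective (le_antisymm (τ.degree_le_iff.2 fun c hc => ?_) (τ.le_degree hmem))
  rw [← Finsupp.cons_tail c] at hc ⊢
  have hc' : c.tail ∈ (P.coeff (c 0)).support := mem_support_coeff_finSuccEquiv.2 hc
  have hcoeff : P.coeff (c 0) ≠ 0 := fun h => by simp [h] at hc'
  rcases (Polynomial.le_natDegree_of_ne_zero hcoeff).lt_or_eq with hlt | heq
  · exact (helim.toSyn_lt_of_lt (by simpa using hlt)).le
  · rw [heq] at hc' ⊢
    exact (hind.toSyn_cons_le_cons_iff _ _ _).2 (τ₀.le_degree hc')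

theorem Ideal.mem_leadingCoeffNth_iff_coeff {R : Type*} [Semiring R] (J : Ideal (Polynomial R))
    (n : ℕ) (x : R) : x ∈ J.leadingCoeffNth n ↔ ∃ F ∈ J, F.degree ≤ n ∧ F.coeff n = x := by
  simp only [Ideal.leadingCoeffNth, Ideal.degreeLE, Submodule.mem_map, Submodule.mem_inf,
    Polynomial.mem_degreeLE, Ideal.mem_ofPolynomial, Polynomial.lcoeff_apply, and_assoc,
    and_comm (a := _ ≤ _)]

section PartialElimination

variable {k : Type*} [Field k] {N : ℕ}

theorem pelimSet_eq_leadingCoeffNth (I : Ideal (MvPolynomial (Fin (N + 1)) k)) (p : ℕ) :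
    pelimSet I p = (I.map (finSuccEquiv k N)).leadingCoeffNth p := by
  ext q
  simp only [SetLike.mem_coe, Ideal.mem_leadingCoeffNth_iff_coeff, Ideal.mem_map_of_equiv]
  constructor
  · rintro (rfl | ⟨f, hfI, -, hdeg, rfl⟩)
    · exact ⟨0, ⟨0, I.zero_mem, map_zero _⟩, by simp, by simp⟩
    · refine ⟨_, ⟨f, hfI, rfl⟩, Polynomial.degree_le_of_natDegree_le hdeg.le, ?_⟩
      rw [Polynomial.leadingCoeff, hdeg]
  · rintro ⟨_, ⟨f, hfI, rfl⟩, hdeg, rfl⟩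
    by_cases hc : (finSuccEquiv k N f).coeff p = 0
    · exact hc ▸ Set.mem_insert _ _
    have hnat : (finSuccEquiv k N f).natDegree = p :=
      (Polynomial.natDegree_le_of_degree_le hdeg).antisymm (Polynomial.le_natDegree_of_ne_zero hc)
    refine Set.mem_insert_of_mem _ ⟨f, hfI, ?_, hnat, by rw [Polynomial.leadingCoeff, hnat]⟩
    rintro rfl
    simp at hc

theorem span_pelimSet (I : Ideal (MvPolynomial (Fin (N + 1)) k)) (p : ℕ) :
    Ideal.span (pelimSet I p) = (I.map (finSuccEquiv k N)).leadingCoeffNth p := by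
  rw [pelimSet_eq_leadingCoeffNth, Ideal.span_eq]

theorem leadingCoeff_mem_span_pelimSet {I : Ideal (MvPolynomial (Fin (N + 1)) k)} {p : ℕ}
    {f : MvPolynomial (Fin (N + 1)) k} (hf : f ∈ I) (hdeg : (finSuccEquiv k N f).natDegree ≤ p) :
    (finSuccEquiv k N f).leadingCoeff ∈ Ideal.span (pelimSet I p) := by
  rw [span_pelimSet, Ideal.mem_leadingCoeffNth]
  exact ⟨_, Ideal.mem_map_of_mem _ hf, Polynomial.degree_le_of_natDegree_le hdeg, rfl⟩

theorem ldeg_eq_degree {n : ℕ} (τ : MonomialOrder (Fin n)) (f : MvPolynomial (Fin n) k) :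
    ldeg τ f = τ.degree f :=
  rfl

theorem monomial_ldeg_leadingCoeff_mem_span {τ : MonomialOrder (Fin (N + 1))}
    {τ₀ : MonomialOrder (Fin N)} (helim : IsElimOrder τ) (hind : InducedOrder τ τ₀)
    {I : Ideal (MvPolynomial (Fin (N + 1)) k)} {G : Set (MvPolynomial (Fin (N + 1)) k)}
    (hG : initialIdeal τ I = Ideal.span ((fun g => monomial (ldeg τ g) (1 : k)) '' G))
    {f : MvPolynomial (Fin (N + 1)) k} (hfI : f ∈ I) (hf0 : f ≠ 0) :
    monomial (ldeg τ₀ (finSuccEquiv k N f).leadingCoeff) (1 : k) ∈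
      Ideal.span ((fun h => monomial (ldeg τ₀ h) (1 : k)) ''
        { h | ∃ g ∈ G, (finSuccEquiv k N g).natDegree ≤ (finSuccEquiv k N f).natDegree ∧
          (finSuccEquiv k N g).leadingCoeff = h }) := by
  have hin : monomial (ldeg τ f) (1 : k) ∈ initialIdeal τ I := Ideal.subset_span ⟨f, hfI, hf0, rfl⟩
  rw [hG, ← Set.image_image (fun s => monomial s (1 : k)) (ldeg τ),
    mem_ideal_span_monomial_image] at hin
  obtain ⟨_, ⟨g, hgG, rfl⟩, hle⟩ := hin (ldeg τ f) (by simp)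
  simp only [ldeg_eq_degree, helim.degree_eq_cons hind, Finsupp.cons_le_cons_iff] at hle ⊢
  exact Ideal.mem_of_dvd _ (monomial_dvd_monomial.2 ⟨Or.inr hle.2, one_dvd _⟩)
    (Ideal.subset_span ⟨_, ⟨g, hgG, hle.1, rfl⟩, rfl⟩)

end PartialElimination

theorem stmt5_general {k : Type*} [Field k] {N : ℕ} (τ : MonomialOrder (Fin (N + 1)))
    (τ₀ : MonomialOrder (Fin N)) (helim : IsElimOrder τ) (hind : InducedOrder τ τ₀)
    (I : Ideal (MvPolynomial (Fin (N + 1)) k))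
    (G : Set (MvPolynomial (Fin (N + 1)) k)) (hG : IsGroebnerBasis τ I G) (p : ℕ) :
    IsGroebnerBasis τ₀ (Ideal.span (pelimSet I p))
      { h | ∃ g ∈ G, (finSuccEquiv k N g).natDegree ≤ p ∧
        (finSuccEquiv k N g).leadingCoeff = h } := by
  obtain ⟨hG0, hGI, hGin⟩ := hG
  have hGp : ∀ q ∈ { h | ∃ g ∈ G, (finSuccEquiv k N g).natDegree ≤ p ∧
      (finSuccEquiv k N g).leadingCoeff = h }, q ∈ Ideal.span (pelimSet I p) ∧ q ≠ 0 := by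
    rintro _ ⟨g, hgG, hgd, rfl⟩
    exact ⟨leadingCoeff_mem_span_pelimSet (hGI hgG) hgd,
      by simpa using ne_of_mem_of_not_mem hgG hG0⟩
  have hK : (Ideal.span (pelimSet I p) : Set (MvPolynomial (Fin N) k)) = pelimSet I p := by
    rw [span_pelimSet, pelimSet_eq_leadingCoeffNth]
  refine ⟨fun h0 => (hGp 0 h0).2 rfl, fun q hq => (hGp q hq).1,
    le_antisymm (Ideal.span_le.2 ?_) (Ideal.span_le.2 ?_)⟩
  · rintro _ ⟨q, hq, hq0, rfl⟩
    obtain rfl | ⟨f, hfI, hf0, rfl, rfl⟩ := hK ▸ (SetLike.mem_coe.2 hq)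
    · exact absurd rfl hq0
    · exact monomial_ldeg_leadingCoeff_mem_span helim hind hGin hfI hf0
  · rintro _ ⟨q, hq, rfl⟩
    exact Ideal.subset_span ⟨q, (hGp q hq).1, (hGp q hq).2, rfl⟩

/-- If `G` is a Gröbner basis of a homogeneous ideal `I` with respect to an elimination order
`τ` for `x₀`, then `G_p = { incoef(g) : g ∈ G, deg_{x₀}(g) ≤ p }` is a Gröbner basis of the
`p`-th partial elimination ideal `K_p(I)` with respect to the induced order `τ₀`. -/
theorem stmt5 {k : Type*} [Field k] {N : ℕ} (τ : MonomialOrder (Fin (N + 1)))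
    (τ₀ : MonomialOrder (Fin N)) (helim : IsElimOrder τ) (hind : InducedOrder τ τ₀)
    (I : Ideal (MvPolynomial (Fin (N + 1)) k)) (hI : IsHomogeneousIdeal I)
    (G : Set (MvPolynomial (Fin (N + 1)) k)) (hG : IsGroebnerBasis τ I G) (p : ℕ) :
    IsGroebnerBasis τ₀ (Ideal.span (pelimSet I p))
      { h | ∃ g ∈ G, (finSuccEquiv k N g).natDegree ≤ p ∧
        (finSuccEquiv k N g).leadingCoeff = h } :=
  stmt5_general τ τ₀ helim hind I G hG p
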